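/- Let U ⊆ ℂ be open, H = H₀ ⊕ H₁ an orthogonal decomposition of a complex Hilbert space into closed subspaces, and α ∈ (0,∞)^{2×2}. For any (A,B,C,D) ∈ 𝒜(U,α₀₀,α₁₁) × ℬ(U,α₀₁) × 𝒞(U,α₁₀) × 𝒟(U,α₀₀,α₁₁), the function M defined blockwise by M(z) := [[A(z)⁻¹, A(z)⁻¹B(z)], [C(z)A(z)⁻¹, D(z) + C(z)A(z)⁻¹B(z)]] is holomorphic U → L(H), each M(z) is boundedly invertible with inverse [[A(z) + B(z)D(z)⁻¹C(z), −B(z)D(z)⁻¹], [−D(z)⁻¹C(z), D(z)⁻¹]], M ∈ 𝔐(U,α), and M is the unique element of 𝔐(U) with Λ₀₀(M) = A, Λ₀₁(M) = B, Λ₁₀(M) = C and Λ₁₁(M) = D. In particular (Λ₀₀,Λ₀₁,Λ₁₀,Λ₁₁) is a bijection from 𝔐(U,α) onto 𝒜(U,α₀₀,α₁₁) × ℬ(U,α₀₁) × 𝒞(U,α₁₀) × 𝒟(U,α₀₀,α₁₁). -/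

import Mathlib

noncomputable section
open Filter Topology ContinuousLinearMap

namespace Paper

/-- `Re S ≥ c` for a bounded operator on a complex Hilbert space:
`Re⟨Sφ,φ⟩ ≥ c‖φ‖²` for all `φ`. -/
def ReGE {K : Type*} [NormedAddCommGroup K] [InnerProductSpace ℂ K]
    (S : K →L[ℂ] K) (c : ℝ) : Prop :=
  ∀ φ : K, c * ‖φ‖ ^ 2 ≤ (inner ℂ (S φ) φ : ℂ).re

variable {H : Type*} [NormedAddCommGroup H] [InnerProductSpace ℂ H] [CompleteSpace H]

/-- Block components of `M ∈ L(H)` w.r.t. the orthogonal decomposition `H = H₀ ⊕ H₀ᗮ`: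
`M_ij = P_i ∘ M ∘ ι_j`. -/
def blk00 (H₀ : Submodule ℂ H) [CompleteSpace H₀] (M : H →L[ℂ] H) : H₀ →L[ℂ] H₀ :=
  (Submodule.orthogonalProjectionOnto H₀) ∘L M ∘L H₀.subtypeL

def blk01 (H₀ : Submodule ℂ H) [CompleteSpace H₀] (M : H →L[ℂ] H) : H₀ᗮ →L[ℂ] H₀ :=
  (Submodule.orthogonalProjectionOnto H₀) ∘L M ∘L H₀ᗮ.subtypeL

def blk10 (H₀ : Submodule ℂ H) [CompleteSpace H₀] (M : H →L[ℂ] H) : H₀ →L[ℂ] H₀ᗮ :=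
  (Submodule.orthogonalProjectionOnto H₀ᗮ) ∘L M ∘L H₀.subtypeL

def blk11 (H₀ : Submodule ℂ H) [CompleteSpace H₀] (M : H →L[ℂ] H) : H₀ᗮ →L[ℂ] H₀ᗮ :=
  (Submodule.orthogonalProjectionOnto H₀ᗮ) ∘L M ∘L H₀ᗮ.subtypeL

/-- `M₀₀⁻¹` (via `Ring.inverse`, which is the genuine inverse when `M₀₀` is invertible). -/
def schur00 (H₀ : Submodule ℂ H) [CompleteSpace H₀] (M : H →L[ℂ] H) : H₀ →L[ℂ] H₀ :=
  Ring.inverse (blk00 H₀ M)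

/-- `M₁₀M₀₀⁻¹`. -/
def schur10 (H₀ : Submodule ℂ H) [CompleteSpace H₀] (M : H →L[ℂ] H) : H₀ →L[ℂ] H₀ᗮ :=
  blk10 H₀ M ∘L schur00 H₀ M

/-- `M₀₀⁻¹M₀₁`. -/
def schur01 (H₀ : Submodule ℂ H) [CompleteSpace H₀] (M : H →L[ℂ] H) : H₀ᗮ →L[ℂ] H₀ :=
  schur00 H₀ M ∘L blk01 H₀ M

/-- `M₁₁ − M₁₀M₀₀⁻¹M₀₁`. -/
def schur11 (H₀ : Submodule ℂ H) [CompleteSpace H₀] (M : H →L[ℂ] H) : H₀ᗮ →L[ℂ] H₀ᗮ :=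
  blk11 H₀ M - blk10 H₀ M ∘L schur00 H₀ M ∘L blk01 H₀ M

/-- `M ∈ ℳ(H₀,H₁)`: both `M₀₀` and `M` are boundedly invertible. -/
def MemM (H₀ : Submodule ℂ H) [CompleteSpace H₀] (M : H →L[ℂ] H) : Prop :=
  IsUnit (blk00 H₀ M) ∧ IsUnit M

/-- `M ∈ ℳ(α)`. -/
def MemMa (H₀ : Submodule ℂ H) [CompleteSpace H₀] (a00 a01 a10 a11 : ℝ)
    (M : H →L[ℂ] H) : Prop :=
  MemM H₀ M ∧ ReGE (blk00 H₀ M) a00 ∧ ReGE (schur00 H₀ M) (1 / a11) ∧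
    ‖schur10 H₀ M‖ ≤ a10 ∧ ‖schur01 H₀ M‖ ≤ a01 ∧
    ReGE (schur11 H₀ M) a00 ∧ ReGE (Ring.inverse (schur11 H₀ M)) (1 / a11)

/-- Holomorphy of a function defined on (the subtype of) a set `U ⊆ ℂ`:
it extends to a function `ℂ → E` differentiable on `U`. -/
def HolFn (U : Set ℂ) {E : Type*} [NormedAddCommGroup E] [NormedSpace ℂ E]
    (f : ↥U → E) : Prop :=
  ∃ g : ℂ → E, DifferentiableOn ℂ g U ∧ ∀ z : ↥U, f z = g (z : ℂ)

/-- The topology of locally uniform (compact) convergence on functions `↥U → E`. -/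
def kc (U : Set ℂ) (E : Type*) [UniformSpace E] : TopologicalSpace (↥U → E) :=
  (UniformOnFun.uniformSpace ↥U E {K : Set ↥U | IsCompact K}).toTopologicalSpace

/-- The locally uniform weak operator topology `𝒯_Λ` on operator-valued functions on `U`:
the initial topology w.r.t. `f ↦ (z ↦ ⟨f(z)φ,ψ⟩) ∈ Hol(U,ℂ)` (compact convergence). -/
def luwot (U : Set ℂ) (X Y : Type*) [NormedAddCommGroup X] [InnerProductSpace ℂ X]
    [NormedAddCommGroup Y] [InnerProductSpace ℂ Y] :
    TopologicalSpace (↥U → (X →L[ℂ] Y)) :=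
  ⨅ (p : X × Y),
    TopologicalSpace.induced (fun f => fun z : ↥U => (inner ℂ p.2 (f z p.1) : ℂ)) (kc U ℂ)

/-- `𝔐(U)`: the holomorphic functions `U → L(H)` taking values in `ℳ(H₀,H₁)`. -/
def MU (U : Set ℂ) (H₀ : Submodule ℂ H) [CompleteSpace H₀] :
    Set (↥U → (H →L[ℂ] H)) :=
  {M | HolFn U M ∧ ∀ z : ↥U, MemM H₀ (M z)}

/-- `𝔐(U,α)`: the holomorphic functions `U → L(H)` taking values in `ℳ(α)`. -/
def MUa (U : Set ℂ) (H₀ : Submodule ℂ H) [CompleteSpace H₀] (a00 a01 a10 a11 : ℝ) :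
    Set (↥U → (H →L[ℂ] H)) :=
  {M | HolFn U M ∧ ∀ z : ↥U, MemMa H₀ a00 a01 a10 a11 (M z)}

/-- The parameterised nonlocal H-topology (parameterised Schur topology)
`τ_Hol(H₀,H₁)`: the initial topology w.r.t. the four Schur-component maps, each into
the corresponding space of operator-valued functions carrying the locally uniform weak
operator topology. -/
def tauHol (U : Set ℂ) (H₀ : Submodule ℂ H) [CompleteSpace H₀] :
    TopologicalSpace (↥U → (H →L[ℂ] H)) :=
  TopologicalSpace.induced (fun M (z : ↥U) => schur00 H₀ (M z)) (luwot U H₀ H₀) ⊓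
    TopologicalSpace.induced (fun M (z : ↥U) => schur10 H₀ (M z)) (luwot U H₀ ↥H₀ᗮ) ⊓
    TopologicalSpace.induced (fun M (z : ↥U) => schur01 H₀ (M z)) (luwot U ↥H₀ᗮ H₀) ⊓
    TopologicalSpace.induced (fun M (z : ↥U) => schur11 H₀ (M z)) (luwot U ↥H₀ᗮ ↥H₀ᗮ)

/-- `𝒜(U,α₀₀,α₁₁)`. -/
def Aset (U : Set ℂ) (H₀ : Submodule ℂ H) [CompleteSpace H₀] (a00 a11 : ℝ) :
    Set (↥U → (H₀ →L[ℂ] H₀)) :=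
  {A | HolFn U A ∧ ∀ z : ↥U,
    IsUnit (A z) ∧ ReGE (Ring.inverse (A z)) a00 ∧ ReGE (A z) (1 / a11)}

/-- `ℬ(U,α₀₁) ⊆ Hol(U, L(H₁,H₀))`. -/
def Bset (U : Set ℂ) (H₀ : Submodule ℂ H) [CompleteSpace H₀] (a01 : ℝ) :
    Set (↥U → (↥H₀ᗮ →L[ℂ] H₀)) :=
  {B | HolFn U B ∧ ∀ z : ↥U, ‖B z‖ ≤ a01}

/-- `𝒞(U,α₁₀) ⊆ Hol(U, L(H₀,H₁))`. -/
def Cset (U : Set ℂ) (H₀ : Submodule ℂ H) [CompleteSpace H₀] (a10 : ℝ) :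
    Set (↥U → (H₀ →L[ℂ] ↥H₀ᗮ)) :=
  {C | HolFn U C ∧ ∀ z : ↥U, ‖C z‖ ≤ a10}

/-- `𝒟(U,α₀₀,α₁₁)`. -/
def Dset (U : Set ℂ) (H₀ : Submodule ℂ H) [CompleteSpace H₀] (a00 a11 : ℝ) :
    Set (↥U → (↥H₀ᗮ →L[ℂ] ↥H₀ᗮ)) :=
  {D | HolFn U D ∧ ∀ z : ↥U,
    IsUnit (D z) ∧ ReGE (D z) a00 ∧ ReGE (Ring.inverse (D z)) (1 / a11)}

/-- Assemble an operator on `H = H₀ ⊕ H₀ᗮ` from its four blocks. -/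
def assemble (H₀ : Submodule ℂ H) [CompleteSpace H₀]
    (P : H₀ →L[ℂ] H₀) (Q : ↥H₀ᗮ →L[ℂ] H₀) (R : H₀ →L[ℂ] ↥H₀ᗮ) (S : ↥H₀ᗮ →L[ℂ] ↥H₀ᗮ) :
    H →L[ℂ] H :=
  H₀.subtypeL ∘L P ∘L (Submodule.orthogonalProjectionOnto H₀) +
    H₀.subtypeL ∘L Q ∘L (Submodule.orthogonalProjectionOnto H₀ᗮ) +
    H₀ᗮ.subtypeL ∘L R ∘L (Submodule.orthogonalProjectionOnto H₀) +
    H₀ᗮ.subtypeL ∘L S ∘L (Submodule.orthogonalProjectionOnto H₀ᗮ)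

/-- The block operator `M(z) = [[A⁻¹, A⁻¹B], [CA⁻¹, D + CA⁻¹B]]` built from
`(A,B,C,D)`. -/
def assembleM (U : Set ℂ) (H₀ : Submodule ℂ H) [CompleteSpace H₀]
    (A : ↥U → (H₀ →L[ℂ] H₀)) (B : ↥U → (↥H₀ᗮ →L[ℂ] H₀))
    (C : ↥U → (H₀ →L[ℂ] ↥H₀ᗮ)) (D : ↥U → (↥H₀ᗮ →L[ℂ] ↥H₀ᗮ)) :
    ↥U → (H →L[ℂ] H) := fun z =>
  assemble H₀ (Ring.inverse (A z)) (Ring.inverse (A z) ∘L B z)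
    (C z ∘L Ring.inverse (A z)) (D z + C z ∘L Ring.inverse (A z) ∘L B z)

/-- The block operator `[[A + BD⁻¹C, −BD⁻¹], [−D⁻¹C, D⁻¹]]`, the pointwise inverse of
`assembleM`. -/
def assembleMinv (U : Set ℂ) (H₀ : Submodule ℂ H) [CompleteSpace H₀]
    (A : ↥U → (H₀ →L[ℂ] H₀)) (B : ↥U → (↥H₀ᗮ →L[ℂ] H₀))
    (C : ↥U → (H₀ →L[ℂ] ↥H₀ᗮ)) (D : ↥U → (↥H₀ᗮ →L[ℂ] ↥H₀ᗮ)) :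
    ↥U → (H →L[ℂ] H) := fun z =>
  assemble H₀ (A z + B z ∘L Ring.inverse (D z) ∘L C z) (-(B z ∘L Ring.inverse (D z)))
    (-(Ring.inverse (D z) ∘L C z)) (Ring.inverse (D z))

end Paper

/-!
Pointwise, `M = [[A⁻¹, A⁻¹B], [CA⁻¹, D + CA⁻¹B]]` has `M₀₀⁻¹ = A`, `M₀₀⁻¹M₀₁ = B`,
`M₁₀M₀₀⁻¹ = C` and Schur complement `D`, and multiplying out the block matrices shows that
`[[A + BD⁻¹C, −BD⁻¹], [−D⁻¹C, D⁻¹]]` is its inverse. Conversely every operator with invertible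
`M₀₀` is reassembled from its four Schur components by the same block formula, which gives
uniqueness and injectivity. Holomorphy survives sums, compositions and inversion of invertible
operators. The bounds defining `ℳ(α)` are exactly the ones defining `𝒜 × ℬ × 𝒞 × 𝒟`, except that
invertibility of `Λ₁₁(M)` has to be recovered from `Re Λ₁₁(M)⁻¹ ≥ 1/α₁₁ > 0`.
-/

namespace Paper

variable {H : Type*} [NormedAddCommGroup H] [InnerProductSpace ℂ H]

section RingInverse
variable {K L : Type*} [NormedAddCommGroup K] [NormedSpace ℂ K]
  [NormedAddCommGroup L] [NormedSpace ℂ L] {A : K →L[ℂ] K}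

lemma ringInverse_comp_self (hA : IsUnit A) : Ring.inverse A ∘L A = .id ℂ K := by
  rw [← mul_def, Ring.inverse_mul_cancel _ hA, one_def]

lemma comp_ringInverse_self (hA : IsUnit A) : A ∘L Ring.inverse A = .id ℂ K := by
  rw [← mul_def, Ring.mul_inverse_cancel _ hA, one_def]

lemma comp_ringInverse_cancel_left (hA : IsUnit A) (Y : L →L[ℂ] K) :
    A ∘L (Ring.inverse A ∘L Y) = Y := by
  rw [← comp_assoc, comp_ringInverse_self hA, id_comp]

lemma ringInverse_comp_cancel_right (hA : IsUnit A) (Y : K →L[ℂ] L) :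
    (Y ∘L Ring.inverse A) ∘L A = Y := by
  rw [comp_assoc, ringInverse_comp_self hA, comp_id]

end RingInverse

lemma isUnit_of_reGE_ringInverse {K : Type*} [NormedAddCommGroup K] [InnerProductSpace ℂ K]
    {S : K →L[ℂ] K} {c : ℝ} (hc : 0 < c) (h : ReGE (Ring.inverse S) c) : IsUnit S := by
  by_contra hS
  -- `Ring.inverse S = 0`, and then the lower bound forces `K` to be trivial
  rw [Ring.inverse_non_unit _ hS] at h
  have hzero : ∀ φ : K, φ = 0 := fun φ => by
    have hφ := h φ
    simp only [zero_apply, inner_zero_left, Complex.zero_re] at hφ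
    have hφ2 : ‖φ‖ ^ 2 ≤ 0 := by nlinarith [sq_nonneg ‖φ‖]
    simpa using hφ2
  have : Subsingleton K := ⟨fun φ ψ => (hzero φ).trans (hzero ψ).symm⟩
  exact hS (isUnit_of_subsingleton S)

section Blocks
variable (H₀ : Submodule ℂ H) [CompleteSpace H₀]
  (P : H₀ →L[ℂ] H₀) (Q : ↥H₀ᗮ →L[ℂ] H₀) (R : H₀ →L[ℂ] ↥H₀ᗮ) (S : ↥H₀ᗮ →L[ℂ] ↥H₀ᗮ)

attribute [local simp] Submodule.orthogonalProjectionOnto_apply_of_mem_orthogonal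
  Submodule.orthogonalProjectionOnto_orthogonal_apply_eq_zero

lemma blk00_assemble : blk00 H₀ (assemble H₀ P Q R S) = P := by
  ext v; simp [blk00, assemble]

lemma blk01_assemble : blk01 H₀ (assemble H₀ P Q R S) = Q := by
  ext v; simp [blk01, assemble]

lemma blk10_assemble : blk10 H₀ (assemble H₀ P Q R S) = R := by
  ext v; simp [blk10, assemble]

lemma blk11_assemble : blk11 H₀ (assemble H₀ P Q R S) = S := by
  ext v; simp [blk11, assemble]

lemma assemble_blk (M : H →L[ℂ] H) :
    assemble H₀ (blk00 H₀ M) (blk01 H₀ M) (blk10 H₀ M) (blk11 H₀ M) = M := by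
  ext x
  simp [assemble, blk00, blk01, blk10, blk11]

lemma assemble_comp_assemble (P' : H₀ →L[ℂ] H₀) (Q' : ↥H₀ᗮ →L[ℂ] H₀) (R' : H₀ →L[ℂ] ↥H₀ᗮ)
    (S' : ↥H₀ᗮ →L[ℂ] ↥H₀ᗮ) :
    assemble H₀ P Q R S ∘L assemble H₀ P' Q' R' S' =
      assemble H₀ (P ∘L P' + Q ∘L R') (P ∘L Q' + Q ∘L S')
        (R ∘L P' + S ∘L R') (R ∘L Q' + S ∘L S') := by
  ext x
  simp only [assemble, comp_add, add_comp, add_apply, comp_apply, Submodule.coe_subtypeL,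
    Submodule.subtype_apply, Submodule.orthogonalProjectionOnto_mem_subspace_eq_self,
    Submodule.orthogonal_orthogonal, SetLike.coe_mem,
    Submodule.orthogonalProjectionOnto_apply_of_mem_orthogonal, map_zero,
    add_zero, zero_add]
  abel

lemma assemble_one_zero_zero_one : assemble H₀ (.id ℂ H₀) 0 0 (.id ℂ H₀ᗮ) = .id ℂ H := by
  ext x
  simp [assemble]

end Blocks

section Schur
variable (H₀ : Submodule ℂ H) [CompleteSpace H₀]
  (A : H₀ →L[ℂ] H₀) (B : ↥H₀ᗮ →L[ℂ] H₀) (C : H₀ →L[ℂ] ↥H₀ᗮ) (D : ↥H₀ᗮ →L[ℂ] ↥H₀ᗮ)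

def schurAssemble : H →L[ℂ] H :=
  assemble H₀ (Ring.inverse A) (Ring.inverse A ∘L B) (C ∘L Ring.inverse A)
    (D + C ∘L Ring.inverse A ∘L B)

def schurAssembleInv : H →L[ℂ] H :=
  assemble H₀ (A + B ∘L Ring.inverse D ∘L C) (-(B ∘L Ring.inverse D))
    (-(Ring.inverse D ∘L C)) (Ring.inverse D)

variable {A D}

lemma schurAssemble_comp_schurAssembleInv (hA : IsUnit A) (hD : IsUnit D) :
    schurAssemble H₀ A B C D ∘L schurAssembleInv H₀ A B C D = .id ℂ H := by
  rw [schurAssemble, schurAssembleInv, assemble_comp_assemble, ← assemble_one_zero_zero_one H₀]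
  congr 1 <;>
  simp only [comp_add, add_comp, comp_neg, comp_assoc, comp_id,
    comp_ringInverse_cancel_left, ringInverse_comp_self, comp_ringInverse_self, hA, hD] <;>
  abel

lemma schurAssembleInv_comp_schurAssemble (hA : IsUnit A) (hD : IsUnit D) :
    schurAssembleInv H₀ A B C D ∘L schurAssemble H₀ A B C D = .id ℂ H := by
  rw [schurAssemble, schurAssembleInv, assemble_comp_assemble, ← assemble_one_zero_zero_one H₀]
  congr 1 <;>
  simp only [comp_add, add_comp, neg_comp, comp_assoc, comp_id,
    comp_ringInverse_cancel_left, ringInverse_comp_self, comp_ringInverse_self, hA, hD] <;>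
  abel

lemma isUnit_schurAssemble (hA : IsUnit A) (hD : IsUnit D) : IsUnit (schurAssemble H₀ A B C D) :=
  ⟨⟨_, schurAssembleInv H₀ A B C D, schurAssemble_comp_schurAssembleInv H₀ B C hA hD,
    schurAssembleInv_comp_schurAssemble H₀ B C hA hD⟩, rfl⟩

lemma blk00_schurAssemble : blk00 H₀ (schurAssemble H₀ A B C D) = Ring.inverse A :=
  blk00_assemble ..

lemma schur00_schurAssemble (hA : IsUnit A) : schur00 H₀ (schurAssemble H₀ A B C D) = A := by
  rw [schur00, blk00_schurAssemble, Ring.inverse_inverse hA]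

lemma schur01_schurAssemble (hA : IsUnit A) : schur01 H₀ (schurAssemble H₀ A B C D) = B := by
  rw [schur01, schur00_schurAssemble H₀ B C hA, schurAssemble, blk01_assemble,
    comp_ringInverse_cancel_left hA]

lemma schur10_schurAssemble (hA : IsUnit A) : schur10 H₀ (schurAssemble H₀ A B C D) = C := by
  rw [schur10, schur00_schurAssemble H₀ B C hA, schurAssemble, blk10_assemble,
    ringInverse_comp_cancel_right hA]

lemma schur11_schurAssemble (hA : IsUnit A) : schur11 H₀ (schurAssemble H₀ A B C D) = D := by
  rw [schur11, schur00_schurAssemble H₀ B C hA, schurAssemble, blk01_assemble, blk10_assemble,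
    blk11_assemble, comp_ringInverse_cancel_left hA, comp_assoc, add_sub_cancel_right]

lemma schurAssemble_schur {M : H →L[ℂ] H} (hM : IsUnit (blk00 H₀ M)) :
    schurAssemble H₀ (schur00 H₀ M) (schur01 H₀ M) (schur10 H₀ M) (schur11 H₀ M) = M := by
  conv_rhs => rw [← assemble_blk H₀ M]
  rw [schurAssemble, schur01, schur10, schur11, schur00, Ring.inverse_inverse hM]
  congr 1
  · exact comp_ringInverse_cancel_left hM _
  · exact ringInverse_comp_cancel_right hM _
  · rw [comp_ringInverse_cancel_left hM, comp_assoc, sub_add_cancel]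

variable {B C} in
lemma memMa_schurAssemble {a00 a01 a10 a11 : ℝ} (hA : IsUnit A)
    (hAinv : ReGE (Ring.inverse A) a00) (hAre : ReGE A (1 / a11)) (hB : ‖B‖ ≤ a01)
    (hC : ‖C‖ ≤ a10) (hD : IsUnit D) (hDre : ReGE D a00) (hDinv : ReGE (Ring.inverse D) (1 / a11)) :
    MemMa H₀ a00 a01 a10 a11 (schurAssemble H₀ A B C D) := by
  refine ⟨⟨?_, isUnit_schurAssemble H₀ B C hA hD⟩, ?_, ?_, ?_, ?_, ?_, ?_⟩
  · rw [blk00_schurAssemble]; exact hA.ringInverse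
  · rwa [blk00_schurAssemble]
  · rwa [schur00_schurAssemble H₀ B C hA]
  · rwa [schur10_schurAssemble H₀ B C hA]
  · rwa [schur01_schurAssemble H₀ B C hA]
  · rwa [schur11_schurAssemble H₀ B C hA]
  · rwa [schur11_schurAssemble H₀ B C hA]

end Schur

section Holomorphic
variable {U : Set ℂ} {E F G : Type*} [NormedAddCommGroup E] [NormedSpace ℂ E]
  [NormedAddCommGroup F] [NormedSpace ℂ F] [NormedAddCommGroup G] [NormedSpace ℂ G]

lemma holFn_iff {f : ↥U → E} :
    HolFn U f ↔ ∃ g : ℂ → E, DifferentiableOn ℂ g U ∧ f = fun z : ↥U => g z := by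
  simp only [HolFn, funext_iff]

lemma holFn_const (T : E) : HolFn U fun _ => T :=
  ⟨fun _ => T, differentiableOn_const _, fun _ => rfl⟩

lemma HolFn.clm_comp {f : ↥U → (F →L[ℂ] G)} {g : ↥U → (E →L[ℂ] F)} (hf : HolFn U f)
    (hg : HolFn U g) : HolFn U fun z => f z ∘L g z := by
  obtain ⟨f', hf', rfl⟩ := holFn_iff.1 hf
  obtain ⟨g', hg', rfl⟩ := holFn_iff.1 hg
  exact ⟨_, hf'.clm_comp hg', fun _ => rfl⟩

lemma HolFn.add {f g : ↥U → E} (hf : HolFn U f) (hg : HolFn U g) :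
    HolFn U fun z => f z + g z := by
  obtain ⟨f', hf', rfl⟩ := holFn_iff.1 hf
  obtain ⟨g', hg', rfl⟩ := holFn_iff.1 hg
  exact ⟨_, hf'.add hg', fun _ => rfl⟩

lemma HolFn.sub {f g : ↥U → E} (hf : HolFn U f) (hg : HolFn U g) :
    HolFn U fun z => f z - g z := by
  obtain ⟨f', hf', rfl⟩ := holFn_iff.1 hf
  obtain ⟨g', hg', rfl⟩ := holFn_iff.1 hg
  exact ⟨_, hf'.sub hg', fun _ => rfl⟩

lemma HolFn.ringInverse [CompleteSpace E] {f : ↥U → (E →L[ℂ] E)} (hf : HolFn U f)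
    (hu : ∀ z, IsUnit (f z)) : HolFn U fun z => Ring.inverse (f z) := by
  obtain ⟨f', hf', rfl⟩ := holFn_iff.1 hf
  exact ⟨_, hf'.inverse fun w hw => hu ⟨w, hw⟩, fun _ => rfl⟩

lemma HolFn.const_comp_comp_const {K : Type*} [NormedAddCommGroup K] [NormedSpace ℂ K]
    {f : ↥U → (F →L[ℂ] G)} (hf : HolFn U f) (L : G →L[ℂ] K) (R : E →L[ℂ] F) :
    HolFn U fun z => L ∘L f z ∘L R :=
  (holFn_const L).clm_comp (hf.clm_comp (holFn_const R))

end Holomorphic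

section OperatorFunctions
variable {U : Set ℂ} (H₀ : Submodule ℂ H) [CompleteSpace H₀]

lemma HolFn.assemble {P : ↥U → (H₀ →L[ℂ] H₀)} {Q : ↥U → (↥H₀ᗮ →L[ℂ] H₀)}
    {R : ↥U → (H₀ →L[ℂ] ↥H₀ᗮ)} {S : ↥U → (↥H₀ᗮ →L[ℂ] ↥H₀ᗮ)}
    (hP : HolFn U P) (hQ : HolFn U Q) (hR : HolFn U R) (hS : HolFn U S) :
    HolFn U fun z => assemble H₀ (P z) (Q z) (R z) (S z) :=
  (((hP.const_comp_comp_const _ _).add (hQ.const_comp_comp_const _ _)).add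
    (hR.const_comp_comp_const _ _)).add (hS.const_comp_comp_const _ _)

lemma holFn_assembleM {A : ↥U → (H₀ →L[ℂ] H₀)} {B : ↥U → (↥H₀ᗮ →L[ℂ] H₀)}
    {C : ↥U → (H₀ →L[ℂ] ↥H₀ᗮ)} {D : ↥U → (↥H₀ᗮ →L[ℂ] ↥H₀ᗮ)} (hA : HolFn U A)
    (hAu : ∀ z, IsUnit (A z)) (hB : HolFn U B) (hC : HolFn U C) (hD : HolFn U D) :
    HolFn U (assembleM U H₀ A B C D) :=
  have hA' := hA.ringInverse hAu
  HolFn.assemble H₀ hA' (hA'.clm_comp hB) (hC.clm_comp hA') (hD.add (hC.clm_comp (hA'.clm_comp hB)))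

/-- The paper's `(Λ₀₀, Λ₀₁, Λ₁₀, Λ₁₁)`. -/
def schurComponents (M : ↥U → (H →L[ℂ] H)) :
    (↥U → (H₀ →L[ℂ] H₀)) × (↥U → (↥H₀ᗮ →L[ℂ] H₀)) × (↥U → (H₀ →L[ℂ] ↥H₀ᗮ)) ×
      (↥U → (↥H₀ᗮ →L[ℂ] ↥H₀ᗮ)) :=
  (fun z => schur00 H₀ (M z), fun z => schur01 H₀ (M z), fun z => schur10 H₀ (M z),
    fun z => schur11 H₀ (M z))

lemma schurComponents_assembleM {A : ↥U → (H₀ →L[ℂ] H₀)} (hAu : ∀ z, IsUnit (A z))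
    (B : ↥U → (↥H₀ᗮ →L[ℂ] H₀)) (C : ↥U → (H₀ →L[ℂ] ↥H₀ᗮ)) (D : ↥U → (↥H₀ᗮ →L[ℂ] ↥H₀ᗮ)) :
    schurComponents H₀ (assembleM U H₀ A B C D) = (A, B, C, D) := by
  simp only [schurComponents, Prod.mk.injEq]
  exact ⟨funext fun z => schur00_schurAssemble H₀ _ _ (hAu z),
    funext fun z => schur01_schurAssemble H₀ _ _ (hAu z),
    funext fun z => schur10_schurAssemble H₀ _ _ (hAu z),
    funext fun z => schur11_schurAssemble H₀ _ _ (hAu z)⟩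

lemma assembleM_schurComponents {M : ↥U → (H →L[ℂ] H)} (hM : ∀ z, IsUnit (blk00 H₀ (M z))) :
    assembleM U H₀ (schurComponents H₀ M).1 (schurComponents H₀ M).2.1
      (schurComponents H₀ M).2.2.1 (schurComponents H₀ M).2.2.2 = M :=
  funext fun z => schurAssemble_schur H₀ (hM z)

lemma holFn_schurComponents {M : ↥U → (H →L[ℂ] H)} (hM : HolFn U M)
    (hu : ∀ z, IsUnit (blk00 H₀ (M z))) :
    HolFn U (schurComponents H₀ M).1 ∧ HolFn U (schurComponents H₀ M).2.1 ∧
      HolFn U (schurComponents H₀ M).2.2.1 ∧ HolFn U (schurComponents H₀ M).2.2.2 := by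
  have h00 : HolFn U fun z => schur00 H₀ (M z) := (hM.const_comp_comp_const _ _).ringInverse hu
  have h01 := hM.const_comp_comp_const (Submodule.orthogonalProjectionOnto H₀) H₀ᗮ.subtypeL
  have h10 := hM.const_comp_comp_const (Submodule.orthogonalProjectionOnto H₀ᗮ) H₀.subtypeL
  have h11 := hM.const_comp_comp_const (Submodule.orthogonalProjectionOnto H₀ᗮ) H₀ᗮ.subtypeL
  exact ⟨h00, h00.clm_comp h01, h10.clm_comp h00, h11.sub (h10.clm_comp (h00.clm_comp h01))⟩

lemma schurComponents_injOn :
    Set.InjOn (schurComponents (U := U) H₀) {M | ∀ z, IsUnit (blk00 H₀ (M z))} := by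
  intro M hM N hN h
  rw [← assembleM_schurComponents H₀ hM, ← assembleM_schurComponents H₀ hN, h]

end OperatorFunctions

variable [CompleteSpace H]

section ParameterClasses
variable {U : Set ℂ} (H₀ : Submodule ℂ H) [CompleteSpace H₀] {a00 a01 a10 a11 : ℝ}

lemma assembleM_mem_MUa {A : ↥U → (H₀ →L[ℂ] H₀)} {B : ↥U → (↥H₀ᗮ →L[ℂ] H₀)}
    {C : ↥U → (H₀ →L[ℂ] ↥H₀ᗮ)} {D : ↥U → (↥H₀ᗮ →L[ℂ] ↥H₀ᗮ)} (hA : A ∈ Aset U H₀ a00 a11)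
    (hB : B ∈ Bset U H₀ a01) (hC : C ∈ Cset U H₀ a10) (hD : D ∈ Dset U H₀ a00 a11) :
    assembleM U H₀ A B C D ∈ MUa U H₀ a00 a01 a10 a11 :=
  ⟨holFn_assembleM H₀ hA.1 (fun z => (hA.2 z).1) hB.1 hC.1 hD.1, fun z =>
    memMa_schurAssemble H₀ (hA.2 z).1 (hA.2 z).2.1 (hA.2 z).2.2 (hB.2 z) (hC.2 z) (hD.2 z).1
      (hD.2 z).2.1 (hD.2 z).2.2⟩

lemma schurComponents_mapsTo (ha11 : 0 < a11) :
    Set.MapsTo (schurComponents H₀) (MUa U H₀ a00 a01 a10 a11)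
      (Aset U H₀ a00 a11 ×ˢ Bset U H₀ a01 ×ˢ Cset U H₀ a10 ×ˢ Dset U H₀ a00 a11) := by
  rintro M ⟨hM, hMa⟩
  choose hMM h00 h00inv h10 h01 h11 h11inv using hMa
  have hu z := (hMM z).1
  obtain ⟨hol00, hol01, hol10, hol11⟩ := holFn_schurComponents H₀ hM hu
  refine ⟨⟨hol00, fun z => ⟨(hu z).ringInverse, ?_, h00inv z⟩⟩, ⟨hol01, h01⟩, ⟨hol10, h10⟩,
    ⟨hol11, fun z => ⟨isUnit_of_reGE_ringInverse (by positivity) (h11inv z), h11 z, h11inv z⟩⟩⟩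
  simpa only [schurComponents, schur00, Ring.inverse_inverse (hu z)] using h00 z

end ParameterClasses

theorem statement_8_general (U : Set ℂ) (H₀ : Submodule ℂ H) [CompleteSpace H₀]
    (a00 a01 a10 a11 : ℝ) (ha11 : 0 < a11) :
    (∀ A ∈ Aset U H₀ a00 a11, ∀ B ∈ Bset U H₀ a01, ∀ C ∈ Cset U H₀ a10,
      ∀ D ∈ Dset U H₀ a00 a11,
      HolFn U (assembleM U H₀ A B C D) ∧
      (∀ z : ↥U,
        assembleM U H₀ A B C D z ∘L assembleMinv U H₀ A B C D z = ContinuousLinearMap.id ℂ H ∧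
        assembleMinv U H₀ A B C D z ∘L assembleM U H₀ A B C D z = ContinuousLinearMap.id ℂ H) ∧
      assembleM U H₀ A B C D ∈ MUa U H₀ a00 a01 a10 a11 ∧
      (fun z : ↥U => schur00 H₀ (assembleM U H₀ A B C D z)) = A ∧
      (fun z : ↥U => schur01 H₀ (assembleM U H₀ A B C D z)) = B ∧
      (fun z : ↥U => schur10 H₀ (assembleM U H₀ A B C D z)) = C ∧
      (fun z : ↥U => schur11 H₀ (assembleM U H₀ A B C D z)) = D ∧
      (∀ N ∈ MU U H₀,
        (fun z : ↥U => schur00 H₀ (N z)) = A → (fun z : ↥U => schur01 H₀ (N z)) = B →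
        (fun z : ↥U => schur10 H₀ (N z)) = C → (fun z : ↥U => schur11 H₀ (N z)) = D →
        N = assembleM U H₀ A B C D)) ∧
    Set.BijOn
      (fun M : ↥U → (H →L[ℂ] H) =>
        ((fun z : ↥U => schur00 H₀ (M z)), (fun z : ↥U => schur01 H₀ (M z)),
          (fun z : ↥U => schur10 H₀ (M z)), (fun z : ↥U => schur11 H₀ (M z))))
      (MUa U H₀ a00 a01 a10 a11)
      ((Aset U H₀ a00 a11) ×ˢ (Bset U H₀ a01) ×ˢ (Cset U H₀ a10) ×ˢ
        (Dset U H₀ a00 a11)) := by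
  refine ⟨fun A hA B hB C hC D hD => ?_, schurComponents_mapsTo H₀ ha11,
    (schurComponents_injOn H₀).mono fun M hM z => (hM.2 z).1.1, ?_⟩
  · have hAu z : IsUnit (A z) := (hA.2 z).1
    refine ⟨holFn_assembleM H₀ hA.1 hAu hB.1 hC.1 hD.1, fun z =>
      ⟨schurAssemble_comp_schurAssembleInv H₀ _ _ (hAu z) (hD.2 z).1,
        schurAssembleInv_comp_schurAssemble H₀ _ _ (hAu z) (hD.2 z).1⟩,
      assembleM_mem_MUa H₀ hA hB hC hD, ?_⟩
    have hcomp := schurComponents_assembleM H₀ hAu B C D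
    simp only [schurComponents, Prod.mk.injEq] at hcomp
    refine ⟨hcomp.1, hcomp.2.1, hcomp.2.2.1, hcomp.2.2.2, ?_⟩
    rintro N hN rfl rfl rfl rfl
    exact (assembleM_schurComponents H₀ fun z => (hN.2 z).1).symm
  · rintro ⟨A, B, C, D⟩ ⟨hA, hB, hC, hD⟩
    exact ⟨_, assembleM_mem_MUa H₀ hA hB hC hD,
      schurComponents_assembleM H₀ (fun z => (hA.2 z).1) B C D⟩

/-- For `(A,B,C,D) ∈ 𝒜 × ℬ × 𝒞 × 𝒟`, the blockwise-defined `M` is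
holomorphic, pointwise boundedly invertible with the stated blockwise inverse, belongs to
`𝔐(U,α)` and is the unique element of `𝔐(U)` whose Schur components are `(A,B,C,D)`;
in particular `(Λ₀₀,Λ₀₁,Λ₁₀,Λ₁₁)` is a bijection from `𝔐(U,α)` onto
`𝒜 × ℬ × 𝒞 × 𝒟`. -/
theorem statement_8 (U : Set ℂ) (hU : IsOpen U) (H₀ : Submodule ℂ H) [CompleteSpace H₀]
    (a00 a01 a10 a11 : ℝ) (ha00 : 0 < a00) (ha01 : 0 < a01) (ha10 : 0 < a10)
    (ha11 : 0 < a11) :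
    (∀ A ∈ Aset U H₀ a00 a11, ∀ B ∈ Bset U H₀ a01, ∀ C ∈ Cset U H₀ a10,
      ∀ D ∈ Dset U H₀ a00 a11,
      HolFn U (assembleM U H₀ A B C D) ∧
      (∀ z : ↥U,
        assembleM U H₀ A B C D z ∘L assembleMinv U H₀ A B C D z = ContinuousLinearMap.id ℂ H ∧
        assembleMinv U H₀ A B C D z ∘L assembleM U H₀ A B C D z = ContinuousLinearMap.id ℂ H) ∧
      assembleM U H₀ A B C D ∈ MUa U H₀ a00 a01 a10 a11 ∧
      (fun z : ↥U => schur00 H₀ (assembleM U H₀ A B C D z)) = A ∧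
      (fun z : ↥U => schur01 H₀ (assembleM U H₀ A B C D z)) = B ∧
      (fun z : ↥U => schur10 H₀ (assembleM U H₀ A B C D z)) = C ∧
      (fun z : ↥U => schur11 H₀ (assembleM U H₀ A B C D z)) = D ∧
      (∀ N ∈ MU U H₀,
        (fun z : ↥U => schur00 H₀ (N z)) = A → (fun z : ↥U => schur01 H₀ (N z)) = B →
        (fun z : ↥U => schur10 H₀ (N z)) = C → (fun z : ↥U => schur11 H₀ (N z)) = D →
        N = assembleM U H₀ A B C D)) ∧
    Set.BijOn
      (fun M : ↥U → (H →L[ℂ] H) =>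
        ((fun z : ↥U => schur00 H₀ (M z)), (fun z : ↥U => schur01 H₀ (M z)),
          (fun z : ↥U => schur10 H₀ (M z)), (fun z : ↥U => schur11 H₀ (M z))))
      (MUa U H₀ a00 a01 a10 a11)
      ((Aset U H₀ a00 a11) ×ˢ (Bset U H₀ a01) ×ˢ (Cset U H₀ a10) ×ˢ
        (Dset U H₀ a00 a11)) :=
  statement_8_general U H₀ a00 a01 a10 a11 ha11

end Paper
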